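/- arXiv:2401.05611 — 3 statements merged into one kernel-verified Lean document; each statement's English description precedes it below -/
import Mathlib

section
/- Let C be the class of rooted pseudo networks that are tree-child, and let U be an unrooted pseudo network that contains a pending subgraph isomorphic to the root gadget (up to the labelling of the two labelled leaves of that gadget). If U has a funneled C_A-orientation, then the root subdivides an edge of the root gadget that is not the edge {r,v}. -/
/-!
Common definitions: rooted (pseudo/phylogenetic) networks represented as arc
relations `D : V → V → Prop` on a vertex type `V`, with in/out-degrees measured
by `Set.ncard`, together with the orientation notions (Variant A, Variant B,
orientations of connector networks) from the paper.
-/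

section Prelude

universe u
variable {V : Type u}

/-- In-degree of `v` in the digraph with arc relation `D`. -/
noncomputable def inDeg (D : V → V → Prop) (v : V) : ℕ := Set.ncard {u | D u v}

/-- Out-degree of `v` in the digraph with arc relation `D`. -/
noncomputable def outDeg (D : V → V → Prop) (v : V) : ℕ := Set.ncard {u | D v u}

/-- A digraph is acyclic if it has no directed cycle. -/
def Acyclic (D : V → V → Prop) : Prop := ∀ v, ¬ Relation.TransGen D v v

/-- A tree vertex: in-degree 1 and out-degree at least 1. -/
def IsTreeVertex (D : V → V → Prop) (v : V) : Prop := inDeg D v = 1 ∧ 1 ≤ outDeg D v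

/-- A leaf (sink) of a digraph. -/
def IsLeafVertex (D : V → V → Prop) (v : V) : Prop := outDeg D v = 0

/-- Tree-child: every non-leaf vertex has a child that is a tree vertex or a leaf. -/
def TreeChild (D : V → V → Prop) : Prop :=
  ∀ v, ¬ IsLeafVertex D v → ∃ u, D v u ∧ (IsTreeVertex D u ∨ IsLeafVertex D u)

/-- Funneled: every reticulation (in-degree at least 2) has out-degree 1. -/
def Funneled (D : V → V → Prop) : Prop := ∀ v, 2 ≤ inDeg D v → outDeg D v = 1

/-- An arc `(a,b)` is a shortcut if there is another directed path from `a` to `b`. -/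
def IsShortcut (D : V → V → Prop) (a b : V) : Prop :=
  D a b ∧ ∃ c, D a c ∧ Relation.TransGen D c b

/-- Normal: tree-child and without shortcuts. -/
def NormalNet (D : V → V → Prop) : Prop := TreeChild D ∧ ∀ a b, ¬ IsShortcut D a b

/-- `D` is a rooted pseudo network with root `ρ` whose set of leaves is `X`
(leaves are labelled by themselves). -/
def IsRootedPseudoNetwork (D : V → V → Prop) (ρ : V) (X : Set V) : Prop :=
  Acyclic D ∧ (∀ v, ¬ D v v) ∧
  inDeg D ρ = 0 ∧ 1 ≤ outDeg D ρ ∧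
  (∀ v, inDeg D v = 0 → v = ρ) ∧
  (∀ v, outDeg D v = 0 → inDeg D v = 1) ∧
  {v | outDeg D v = 0} = X ∧
  (∀ v, v ≠ ρ → outDeg D v ≠ 0 → 1 ≤ inDeg D v ∧ 1 ≤ outDeg D v)

/-- `D` is a rooted phylogenetic network with root `ρ` and leaf set `X`:
additionally every internal vertex has in-degree 1 and out-degree ≥ 2, or
in-degree ≥ 2 and out-degree ≥ 1. -/
def IsRootedPhyloNetwork (D : V → V → Prop) (ρ : V) (X : Set V) : Prop :=
  Acyclic D ∧ (∀ v, ¬ D v v) ∧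
  inDeg D ρ = 0 ∧ 1 ≤ outDeg D ρ ∧
  (∀ v, inDeg D v = 0 → v = ρ) ∧
  (∀ v, outDeg D v = 0 → inDeg D v = 1) ∧
  {v | outDeg D v = 0} = X ∧
  (∀ v, v ≠ ρ → outDeg D v ≠ 0 →
    (inDeg D v = 1 ∧ 2 ≤ outDeg D v) ∨ (2 ≤ inDeg D v ∧ 1 ≤ outDeg D v))

/-- `{u,w} = {a,b}` as unordered pairs. -/
def SamePair (u w a b : V) : Prop := (u = a ∧ w = b) ∨ (u = b ∧ w = a)

/-- A Variant-A orientation of the undirected graph `adj` obtained by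
subdividing the edge `{a,b}` with a new root vertex `none` and directing all
edges; `D` is the resulting arc relation on `Option V` (the root is `none`). -/
def VariantA (adj : V → V → Prop) (a b : V) (D : Option V → Option V → Prop) : Prop :=
  adj a b ∧
  D none (some a) ∧ D none (some b) ∧
  (∀ o, ¬ D o none) ∧
  (∀ u, D none (some u) → u = a ∨ u = b) ∧
  (∀ u w : V, D (some u) (some w) → adj u w ∧ ¬ SamePair u w a b) ∧
  (∀ u w : V, adj u w → ¬ SamePair u w a b → (D (some u) (some w) ↔ ¬ D (some w) (some u)))

/-- `D` assigns to each edge of `adj` exactly one direction (used for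
Variant-B orientations and for orientations of connector networks). -/
def IsOrientation (adj D : V → V → Prop) : Prop :=
  (∀ a b, D a b → adj a b) ∧ (∀ a b, adj a b → (D a b ↔ ¬ D b a))

/-- An orientation of a connector network with labelled leaves `L` and
connector leaves `Uc` that is acyclic, in which every labelled leaf has
out-degree 0 and every vertex not in `L ∪ Uc` has in-degree ≥ 1 and
out-degree ≥ 1 (the standing hypotheses for the compatibility notions). -/
def GoodOrientation (adj D : V → V → Prop) (L Uc : Set V) : Prop :=
  IsOrientation adj D ∧ Acyclic D ∧ (∀ v ∈ L, outDeg D v = 0) ∧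
  (∀ v, v ∉ L ∪ Uc → 1 ≤ inDeg D v ∧ 1 ≤ outDeg D v)

/-- F-compatible: every vertex of in-degree at least 2 has out-degree 1. -/
def FCompatible (D : V → V → Prop) : Prop := ∀ v, 2 ≤ inDeg D v → outDeg D v = 1

/-- TC-compatible orientation of a connector network. -/
def TCCompatible (D : V → V → Prop) (L Uc : Set V) : Prop :=
  ∀ v, v ∉ L ∪ Uc → ∃ u, D v u ∧ (u ∈ L ∪ Uc ∨ (inDeg D u = 1 ∧ 1 ≤ outDeg D u))

/-- Strongly TC-compatible orientation of a connector network. -/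
def StrongTCCompatible (D : V → V → Prop) (L Uc : Set V) : Prop :=
  ∀ v, v ∉ L ∪ Uc → ∃ u, D v u ∧ (u ∈ L ∨ (inDeg D u = 1 ∧ 1 ≤ outDeg D u))

end Prelude

namespace PaperFormalization

/-- Vertices of the root gadget: connector leaf `r`, internal vertices
`v,w,x,y,z`, and labelled leaves `lf, lf'`. -/
inductive RGV : Type
  | r | v | w | x | y | z | lf | lf'

/-- The edges of the root gadget (one fixed orientation of each edge). -/
def rgBase : RGV → RGV → Prop
  | .r, .v => True
  | .v, .w => True
  | .v, .x => True
  | .w, .x => True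
  | .w, .y => True
  | .x, .z => True
  | .y, .z => True
  | .y, .lf => True
  | .z, .lf' => True
  | _, _ => False

/-- Adjacency relation of the root gadget. -/
def rgAdj (a b : RGV) : Prop := rgBase a b ∨ rgBase b a

/-- Leaf set of the partner network of the root gadget (the connector leaf `r`
is regarded as a labelled leaf). -/
def rgLeaves : Set RGV := {RGV.r, RGV.lf, RGV.lf'}

end PaperFormalization


namespace PaperFormalization

instance : DecidableEq RGV := fun a b => by
  cases a <;> cases b <;> first | exact isTrue rfl | exact isFalse (fun h => nomatch h)

instance (a b : RGV) : Decidable (rgBase a b) := by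
  cases a <;> cases b <;> first | exact isTrue trivial | exact isFalse id

instance (a b : RGV) : Decidable (rgAdj a b) := by unfold rgAdj; infer_instance

end PaperFormalization

section AuxDeg

universe u

instance aux_finite_option {α : Type u} [Finite α] : Finite (Option α) := by
  cases nonempty_fintype α
  infer_instance

variable {V : Type u} [Finite V] {D : V → V → Prop}

lemma aux_exists_out {v : V} (h : outDeg D v ≠ 0) : ∃ u, D v u := by
  by_contra hc
  push_neg at hc
  apply h
  unfold outDeg
  rw [Set.ncard_eq_zero (Set.toFinite _)]
  ext u
  simp [hc u]

lemma aux_exists_in {v : V} (h : 1 ≤ inDeg D v) : ∃ u, D u v := by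
  unfold inDeg at h
  exact (Set.ncard_pos (s := {u | D u v}) (Set.toFinite _)).mp (by omega)

lemma aux_two_le_ncard {s : Set V} {u1 u2 : V} (h1 : u1 ∈ s) (h2 : u2 ∈ s)
    (hne : u1 ≠ u2) : 2 ≤ s.ncard :=
  (Set.one_lt_ncard (Set.toFinite _)).mpr ⟨u1, h1, u2, h2, hne⟩

lemma aux_two_le_inDeg {v u1 u2 : V} (h1 : D u1 v) (h2 : D u2 v) (hne : u1 ≠ u2) :
    2 ≤ inDeg D v :=
  aux_two_le_ncard (s := {u | D u v}) h1 h2 hne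

lemma aux_not_out {v : V} (h : outDeg D v = 0) : ∀ u, ¬ D v u := by
  intro u hu
  unfold outDeg at h
  rw [Set.ncard_eq_zero (Set.toFinite _)] at h
  have : u ∈ {u | D v u} := hu
  rw [h] at this
  exact this

end AuxDeg

namespace PaperFormalization

/-- Corollary `c:root_gadget`: if an unrooted pseudo network
`U` (given by a symmetric irreflexive adjacency `adjU` on a finite vertex type
`W`, whose labelled leaves are its degree-1 vertices) contains the root gadget
as a pending subgraph (via the embedding `φ`), then every funneled
`C_A`-orientation of `U` (`C` = tree-child rooted pseudo networks) subdivides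
an edge of the root gadget different from `{r,v}`. -/
theorem root_of_funneled_treechild_CA_orientation_lies_in_pending_root_gadget
    {W : Type} [Finite W] (adjU : W → W → Prop) (φ : RGV → W)
    (hsymm : ∀ a b, adjU a b → adjU b a)
    (hirr : ∀ a, ¬ adjU a a)
    (hinj : Function.Injective φ)
    -- the gadget sits in `U` with exactly its own edges between gadget vertices
    (hedges : ∀ a b : RGV, rgAdj a b ↔ adjU (φ a) (φ b))
    -- gadget vertices other than the connector leaf `r` have all their
    -- neighbours inside the gadget
    (hpend : ∀ a : RGV, a ≠ RGV.r → ∀ w : W, adjU (φ a) w → ∃ b : RGV, w = φ b) :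
    ∀ (a b : W) (D : Option W → Option W → Prop),
      VariantA adjU a b D →
      IsRootedPseudoNetwork D none
        (Option.some '' {w : W | Set.ncard {u : W | adjU w u} = 1}) →
      TreeChild D → Funneled D →
      ∃ a' b' : RGV, rgAdj a' b' ∧
        ((a = φ a' ∧ b = φ b') ∨ (a = φ b' ∧ b = φ a')) ∧
        ¬ SamePair a' b' RGV.r RGV.v := by
  intro a b D hVA hRPN hTC _hF
  by_contra hcon
  push_neg at hcon
  obtain ⟨hadjab, hDa, hDb, hnonone, hfromroot, harcadj, horient⟩ := hVA
  obtain ⟨hacyc, hirrD, hrin, hrout, hruniq, hleafin, hX, hint⟩ := hRPN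
  -- Step A: gadget vertices other than r, v are not endpoints of the subdivided edge
  have hab : ∀ t : RGV, t ≠ RGV.r → t ≠ RGV.v → φ t ≠ a ∧ φ t ≠ b := by
    intro t htr htv
    constructor
    · intro h
      have hadj' : adjU (φ t) b := by rw [h]; exact hadjab
      obtain ⟨s, hs⟩ := hpend t htr b hadj'
      have hrg : rgAdj t s := (hedges t s).mpr (by rw [← hs]; exact hadj')
      rcases hcon t s hrg (Or.inl ⟨h.symm, hs⟩) with ⟨h1, _⟩ | ⟨h1, _⟩
      · exact htr h1
      · exact htv h1
    · intro h
      have hadj' : adjU (φ t) a := by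
        apply hsymm
        rw [h]; exact hadjab
      obtain ⟨s, hs⟩ := hpend t htr a hadj'
      have hrg : rgAdj t s := (hedges t s).mpr (by rw [← hs]; exact hadj')
      rcases hcon t s hrg (Or.inr ⟨hs, h.symm⟩) with ⟨h1, _⟩ | ⟨h1, _⟩
      · exact htr h1
      · exact htv h1
  -- no arcs from the root into gadget vertices other than r, v
  have hnab : ∀ t : RGV, t ≠ RGV.r → t ≠ RGV.v → ¬ D none (some (φ t)) := by
    intro t htr htv hD
    rcases hfromroot (φ t) hD with h | h
    · exact (hab t htr htv).1 h
    · exact (hab t htr htv).2 h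
  -- each gadget edge whose second endpoint avoids r, v is oriented in exactly one way
  have hdir : ∀ t s : RGV, rgAdj t s → s ≠ RGV.r → s ≠ RGV.v →
      (D (some (φ t)) (some (φ s)) ↔ ¬ D (some (φ s)) (some (φ t))) := by
    intro t s hrg hsr hsv
    refine horient (φ t) (φ s) ((hedges t s).mp hrg) ?_
    rintro (⟨h1, h2⟩ | ⟨h1, h2⟩)
    · exact (hab s hsr hsv).2 h2
    · exact (hab s hsr hsv).1 h2
  -- out-neighbours of gadget vertices other than r are gadget neighbours
  have houtnbr : ∀ t : RGV, t ≠ RGV.r → ∀ u, D (some (φ t)) u →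
      ∃ s, rgAdj t s ∧ u = some (φ s) := by
    intro t htr u hu
    match u with
    | none => exact absurd hu (hnonone _)
    | some w' =>
      have h1 := (harcadj (φ t) w' hu).1
      obtain ⟨s, rfl⟩ := hpend t htr w' h1
      exact ⟨s, (hedges t s).mpr h1, rfl⟩
  -- in-neighbours of gadget vertices other than r, v are gadget neighbours
  have hinnbr : ∀ t : RGV, t ≠ RGV.r → t ≠ RGV.v → ∀ u, D u (some (φ t)) →
      ∃ s, rgAdj t s ∧ u = some (φ s) := by
    intro t htr htv u hu
    match u with
    | none => exact absurd hu (hnab t htr htv)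
    | some w' =>
      have h1 := hsymm _ _ ((harcadj w' (φ t) hu).1)
      obtain ⟨s, rfl⟩ := hpend t htr w' h1
      exact ⟨s, (hedges t s).mpr h1, rfl⟩
  have hFne : ∀ s t : RGV, s ≠ t → (some (φ s) : Option W) ≠ some (φ t) := by
    intro s t h he
    exact h (hinj (Option.some_injective W he))
  -- neighbour enumerations in the gadget
  have hadjw : ∀ s, rgAdj RGV.w s → s = RGV.v ∨ s = RGV.x ∨ s = RGV.y := by
    intro s h; cases s <;> revert h <;> decide
  have hadjx : ∀ s, rgAdj RGV.x s → s = RGV.v ∨ s = RGV.w ∨ s = RGV.z := by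
    intro s h; cases s <;> revert h <;> decide
  have hadjy : ∀ s, rgAdj RGV.y s → s = RGV.w ∨ s = RGV.z ∨ s = RGV.lf := by
    intro s h; cases s <;> revert h <;> decide
  have hadjz : ∀ s, rgAdj RGV.z s → s = RGV.x ∨ s = RGV.y ∨ s = RGV.lf' := by
    intro s h; cases s <;> revert h <;> decide
  have hadjlf : ∀ s, rgAdj RGV.lf s → s = RGV.y := by
    intro s h; cases s <;> revert h <;> decide
  have hadjlf' : ∀ s, rgAdj RGV.lf' s → s = RGV.z := by
    intro s h; cases s <;> revert h <;> decide
  -- the labelled leaves of the gadget are sinks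
  have hleaf : ∀ t s : RGV, t ≠ RGV.r → rgAdj t s → (∀ s', rgAdj t s' → s' = s) →
      outDeg D (some (φ t)) = 0 := by
    intro t s htr hrg huniq
    have hset : {u | adjU (φ t) u} = {φ s} := by
      ext u
      simp only [Set.mem_setOf_eq, Set.mem_singleton_iff]
      constructor
      · intro hu
        obtain ⟨s', rfl⟩ := hpend t htr u hu
        rw [huniq s' ((hedges t s').mpr hu)]
      · rintro rfl
        exact (hedges t s).mp hrg
    have hmem : (some (φ t) : Option W) ∈ {p | outDeg D p = 0} := by
      rw [hX]
      exact ⟨φ t, by simp [hset], rfl⟩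
    exact hmem
  have hlf0 : outDeg D (some (φ RGV.lf)) = 0 :=
    hleaf RGV.lf RGV.y (by decide) (by decide) hadjlf
  have hlf'0 : outDeg D (some (φ RGV.lf')) = 0 :=
    hleaf RGV.lf' RGV.z (by decide) (by decide) hadjlf'
  -- internal gadget vertices are not sinks
  have hnl : ∀ t s1 s2 : RGV, rgAdj t s1 → rgAdj t s2 → s1 ≠ s2 →
      outDeg D (some (φ t)) ≠ 0 := by
    intro t s1 s2 h1 h2 hne h0
    have hmem : (some (φ t) : Option W) ∈
        Option.some '' {w' | Set.ncard {u | adjU w' u} = 1} := by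
      rw [← hX]; exact h0
    obtain ⟨w', hw', heq⟩ := hmem
    have hwt : w' = φ t := Option.some_injective W heq
    rw [hwt] at hw'
    have h2le : 2 ≤ Set.ncard {u | adjU (φ t) u} :=
      aux_two_le_ncard (s := {u | adjU (φ t) u}) ((hedges t s1).mp h1)
        ((hedges t s2).mp h2) (fun he => hne (hinj he))
    have : Set.ncard {u | adjU (φ t) u} = 1 := hw'
    omega
  have hw0 : outDeg D (some (φ RGV.w)) ≠ 0 := hnl RGV.w RGV.v RGV.x (by decide) (by decide) (by decide)
  have hx0 : outDeg D (some (φ RGV.x)) ≠ 0 := hnl RGV.x RGV.v RGV.w (by decide) (by decide) (by decide)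
  have hy0 : outDeg D (some (φ RGV.y)) ≠ 0 := hnl RGV.y RGV.w RGV.z (by decide) (by decide) (by decide)
  have hz0 : outDeg D (some (φ RGV.z)) ≠ 0 := hnl RGV.z RGV.x RGV.y (by decide) (by decide) (by decide)
  have hwio := hint (some (φ RGV.w)) (by simp) hw0
  have hxio := hint (some (φ RGV.x)) (by simp) hx0
  have hyio := hint (some (φ RGV.y)) (by simp) hy0
  have hzio := hint (some (φ RGV.z)) (by simp) hz0
  -- edge direction dichotomies
  have Ivw := hdir RGV.v RGV.w (by decide) (by decide) (by decide)
  have Ivx := hdir RGV.v RGV.x (by decide) (by decide) (by decide)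
  have Iwx := hdir RGV.w RGV.x (by decide) (by decide) (by decide)
  have Iwy := hdir RGV.w RGV.y (by decide) (by decide) (by decide)
  have Ixz := hdir RGV.x RGV.z (by decide) (by decide) (by decide)
  have Iyz := hdir RGV.y RGV.z (by decide) (by decide) (by decide)
  -- in/out neighbour characterisations
  have outw : ∀ u, D (some (φ RGV.w)) u →
      u = some (φ RGV.v) ∨ u = some (φ RGV.x) ∨ u = some (φ RGV.y) := by
    intro u hu
    obtain ⟨s, hs, rfl⟩ := houtnbr RGV.w (by decide) u hu
    rcases hadjw s hs with rfl | rfl | rfl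
    · exact Or.inl rfl
    · exact Or.inr (Or.inl rfl)
    · exact Or.inr (Or.inr rfl)
  have outx : ∀ u, D (some (φ RGV.x)) u →
      u = some (φ RGV.v) ∨ u = some (φ RGV.w) ∨ u = some (φ RGV.z) := by
    intro u hu
    obtain ⟨s, hs, rfl⟩ := houtnbr RGV.x (by decide) u hu
    rcases hadjx s hs with rfl | rfl | rfl
    · exact Or.inl rfl
    · exact Or.inr (Or.inl rfl)
    · exact Or.inr (Or.inr rfl)
  have inw : ∀ u, D u (some (φ RGV.w)) →
      u = some (φ RGV.v) ∨ u = some (φ RGV.x) ∨ u = some (φ RGV.y) := by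
    intro u hu
    obtain ⟨s, hs, rfl⟩ := hinnbr RGV.w (by decide) (by decide) u hu
    rcases hadjw s hs with rfl | rfl | rfl
    · exact Or.inl rfl
    · exact Or.inr (Or.inl rfl)
    · exact Or.inr (Or.inr rfl)
  have inx : ∀ u, D u (some (φ RGV.x)) →
      u = some (φ RGV.v) ∨ u = some (φ RGV.w) ∨ u = some (φ RGV.z) := by
    intro u hu
    obtain ⟨s, hs, rfl⟩ := hinnbr RGV.x (by decide) (by decide) u hu
    rcases hadjx s hs with rfl | rfl | rfl
    · exact Or.inl rfl
    · exact Or.inr (Or.inl rfl)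
    · exact Or.inr (Or.inr rfl)
  have iny : ∀ u, D u (some (φ RGV.y)) →
      u = some (φ RGV.w) ∨ u = some (φ RGV.z) := by
    intro u hu
    obtain ⟨s, hs, rfl⟩ := hinnbr RGV.y (by decide) (by decide) u hu
    rcases hadjy s hs with rfl | rfl | rfl
    · exact Or.inl rfl
    · exact Or.inr rfl
    · exact absurd hu (aux_not_out hlf0 _)
  have inz : ∀ u, D u (some (φ RGV.z)) →
      u = some (φ RGV.x) ∨ u = some (φ RGV.y) := by
    intro u hu
    obtain ⟨s, hs, rfl⟩ := hinnbr RGV.z (by decide) (by decide) u hu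
    rcases hadjz s hs with rfl | rfl | rfl
    · exact Or.inl rfl
    · exact Or.inr rfl
    · exact absurd hu (aux_not_out hlf'0 _)
  -- a vertex with two distinct in-arcs and positive out-degree is
  -- neither a tree vertex nor a leaf
  have notgood : ∀ (t : RGV) (u1 u2 : Option W), D u1 (some (φ t)) → D u2 (some (φ t)) →
      u1 ≠ u2 → outDeg D (some (φ t)) ≠ 0 →
      ¬ (IsTreeVertex D (some (φ t)) ∨ IsLeafVertex D (some (φ t))) := by
    intro t u1 u2 h1 h2 hne h0 hg
    rcases hg with ⟨hin, _⟩ | hlfv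
    · have := aux_two_le_inDeg h1 h2 hne
      omega
    · exact h0 hlfv
  -- case analysis on the orientation of the edges v-w, v-x, w-x
  have dvw : D (some (φ RGV.v)) (some (φ RGV.w)) ∨ D (some (φ RGV.w)) (some (φ RGV.v)) := by
    rcases em (D (some (φ RGV.v)) (some (φ RGV.w))) with h | h
    · exact Or.inl h
    · exact Or.inr (by by_contra h2; exact h (Ivw.mpr h2))
  have dvx : D (some (φ RGV.v)) (some (φ RGV.x)) ∨ D (some (φ RGV.x)) (some (φ RGV.v)) := by
    rcases em (D (some (φ RGV.v)) (some (φ RGV.x))) with h | h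
    · exact Or.inl h
    · exact Or.inr (by by_contra h2; exact h (Ivx.mpr h2))
  have dwx : D (some (φ RGV.w)) (some (φ RGV.x)) ∨ D (some (φ RGV.x)) (some (φ RGV.w)) := by
    rcases em (D (some (φ RGV.w)) (some (φ RGV.x))) with h | h
    · exact Or.inl h
    · exact Or.inr (by by_contra h2; exact h (Iwx.mpr h2))
  have dyz : D (some (φ RGV.y)) (some (φ RGV.z)) ∨ D (some (φ RGV.z)) (some (φ RGV.y)) := by
    rcases em (D (some (φ RGV.y)) (some (φ RGV.z))) with h | h
    · exact Or.inl h
    · exact Or.inr (by by_contra h2; exact h (Iyz.mpr h2))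
  have dxz : D (some (φ RGV.x)) (some (φ RGV.z)) ∨ D (some (φ RGV.z)) (some (φ RGV.x)) := by
    rcases em (D (some (φ RGV.x)) (some (φ RGV.z))) with h | h
    · exact Or.inl h
    · exact Or.inr (by by_contra h2; exact h (Ixz.mpr h2))
  have dwy : D (some (φ RGV.w)) (some (φ RGV.y)) ∨ D (some (φ RGV.y)) (some (φ RGV.w)) := by
    rcases em (D (some (φ RGV.w)) (some (φ RGV.y))) with h | h
    · exact Or.inl h
    · exact Or.inr (by by_contra h2; exact h (Iwy.mpr h2))
  rcases dvw with hvw | hwv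
  · rcases dvx with hvx | hxv
    · -- Case A : v→w, v→x
      have nwv : ¬ D (some (φ RGV.w)) (some (φ RGV.v)) := Ivw.mp hvw
      have nxv : ¬ D (some (φ RGV.x)) (some (φ RGV.v)) := Ivx.mp hvx
      rcases dwx with hwx | hxw
      · -- A1 : w→x
        have nxw : ¬ D (some (φ RGV.x)) (some (φ RGV.w)) := Iwx.mp hwx
        have hxz : D (some (φ RGV.x)) (some (φ RGV.z)) := by
          obtain ⟨u, hu⟩ := aux_exists_out hx0
          rcases outx u hu with rfl | rfl | rfl
          · exact absurd hu nxv
          · exact absurd hu nxw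
          · exact hu
        rcases dyz with hyz | hzy
        · -- A1a : y→z ; tree-child fails at x
          obtain ⟨u, hu, hgood⟩ := hTC (some (φ RGV.x)) hx0
          rcases outx u hu with rfl | rfl | rfl
          · exact nxv hu
          · exact nxw hu
          · exact notgood RGV.z (some (φ RGV.x)) (some (φ RGV.y)) hxz hyz
              (hFne RGV.x RGV.y (by decide)) hz0 hgood
        · -- A1b : z→y
          rcases dwy with hwy | hyw
          · -- tree-child fails at w
            obtain ⟨u, hu, hgood⟩ := hTC (some (φ RGV.w)) hw0
            rcases outw u hu with rfl | rfl | rfl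
            · exact nwv hu
            · exact notgood RGV.x (some (φ RGV.v)) (some (φ RGV.w)) hvx hwx
                (hFne RGV.v RGV.w (by decide)) hx0 hgood
            · exact notgood RGV.y (some (φ RGV.w)) (some (φ RGV.z)) hwy hzy
                (hFne RGV.w RGV.z (by decide)) hy0 hgood
          · -- cycle w→x→z→y→w
            exact hacyc _ (Relation.TransGen.head hwx (Relation.TransGen.head hxz
              (Relation.TransGen.head hzy (Relation.TransGen.single hyw))))
      · -- A2 : x→w
        have nwx : ¬ D (some (φ RGV.w)) (some (φ RGV.x)) := fun h => Iwx.mp h hxw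
        have hwy : D (some (φ RGV.w)) (some (φ RGV.y)) := by
          obtain ⟨u, hu⟩ := aux_exists_out hw0
          rcases outw u hu with rfl | rfl | rfl
          · exact absurd hu nwv
          · exact absurd hu nwx
          · exact hu
        rcases dxz with hxz | hzx
        · -- A2a : x→z
          rcases dyz with hyz | hzy
          · -- tree-child fails at x
            obtain ⟨u, hu, hgood⟩ := hTC (some (φ RGV.x)) hx0
            rcases outx u hu with rfl | rfl | rfl
            · exact nxv hu
            · exact notgood RGV.w (some (φ RGV.v)) (some (φ RGV.x)) hvw hxw
                (hFne RGV.v RGV.x (by decide)) hw0 hgood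
            · exact notgood RGV.z (some (φ RGV.x)) (some (φ RGV.y)) hxz hyz
                (hFne RGV.x RGV.y (by decide)) hz0 hgood
          · -- tree-child fails at w
            obtain ⟨u, hu, hgood⟩ := hTC (some (φ RGV.w)) hw0
            rcases outw u hu with rfl | rfl | rfl
            · exact nwv hu
            · exact nwx hu
            · exact notgood RGV.y (some (φ RGV.w)) (some (φ RGV.z)) hwy hzy
                (hFne RGV.w RGV.z (by decide)) hy0 hgood
        · -- A2b : z→x ; cycle w→y→z→x→w
          have nxz : ¬ D (some (φ RGV.x)) (some (φ RGV.z)) := fun h => Ixz.mp h hzx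
          have hyz : D (some (φ RGV.y)) (some (φ RGV.z)) := by
            obtain ⟨u, hu⟩ := aux_exists_in hzio.1
            rcases inz u hu with rfl | rfl
            · exact absurd hu nxz
            · exact hu
          exact hacyc _ (Relation.TransGen.head hwy (Relation.TransGen.head hyz
            (Relation.TransGen.head hzx (Relation.TransGen.single hxw))))
    · -- Case B : v→w, x→v
      have nwv : ¬ D (some (φ RGV.w)) (some (φ RGV.v)) := Ivw.mp hvw
      have nvx : ¬ D (some (φ RGV.v)) (some (φ RGV.x)) := fun h => Ivx.mp h hxv
      rcases dwx with hwx | hxw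
      · -- cycle v→w→x→v
        exact hacyc _ (Relation.TransGen.head hvw (Relation.TransGen.head hwx
          (Relation.TransGen.single hxv)))
      · have nwx : ¬ D (some (φ RGV.w)) (some (φ RGV.x)) := fun h => Iwx.mp h hxw
        have hwy : D (some (φ RGV.w)) (some (φ RGV.y)) := by
          obtain ⟨u, hu⟩ := aux_exists_out hw0
          rcases outw u hu with rfl | rfl | rfl
          · exact absurd hu nwv
          · exact absurd hu nwx
          · exact hu
        have hzx : D (some (φ RGV.z)) (some (φ RGV.x)) := by
          obtain ⟨u, hu⟩ := aux_exists_in hxio.1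
          rcases inx u hu with rfl | rfl | rfl
          · exact absurd hu nvx
          · exact absurd hu nwx
          · exact hu
        have nxz : ¬ D (some (φ RGV.x)) (some (φ RGV.z)) := fun h => Ixz.mp h hzx
        have hyz : D (some (φ RGV.y)) (some (φ RGV.z)) := by
          obtain ⟨u, hu⟩ := aux_exists_in hzio.1
          rcases inz u hu with rfl | rfl
          · exact absurd hu nxz
          · exact hu
        exact hacyc _ (Relation.TransGen.head hwy (Relation.TransGen.head hyz
          (Relation.TransGen.head hzx (Relation.TransGen.single hxw))))
  · rcases dvx with hvx | hxv
    · -- Case C : w→v, v→x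
      have nvw : ¬ D (some (φ RGV.v)) (some (φ RGV.w)) := fun h => Ivw.mp h hwv
      have nxv : ¬ D (some (φ RGV.x)) (some (φ RGV.v)) := Ivx.mp hvx
      rcases dwx with hwx | hxw
      · have nxw : ¬ D (some (φ RGV.x)) (some (φ RGV.w)) := Iwx.mp hwx
        have hxz : D (some (φ RGV.x)) (some (φ RGV.z)) := by
          obtain ⟨u, hu⟩ := aux_exists_out hx0
          rcases outx u hu with rfl | rfl | rfl
          · exact absurd hu nxv
          · exact absurd hu nxw
          · exact hu
        have hyw : D (some (φ RGV.y)) (some (φ RGV.w)) := by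
          obtain ⟨u, hu⟩ := aux_exists_in hwio.1
          rcases inw u hu with rfl | rfl | rfl
          · exact absurd hu nvw
          · exact absurd hu nxw
          · exact hu
        have nwy : ¬ D (some (φ RGV.w)) (some (φ RGV.y)) := fun h => Iwy.mp h hyw
        have hzy : D (some (φ RGV.z)) (some (φ RGV.y)) := by
          obtain ⟨u, hu⟩ := aux_exists_in hyio.1
          rcases iny u hu with rfl | rfl
          · exact absurd hu nwy
          · exact hu
        -- cycle v→x→z→y→w→v
        exact hacyc _ (Relation.TransGen.head hvx (Relation.TransGen.head hxz
          (Relation.TransGen.head hzy (Relation.TransGen.head hyw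
            (Relation.TransGen.single hwv)))))
      · -- cycle v→x→w→v
        exact hacyc _ (Relation.TransGen.head hvx (Relation.TransGen.head hxw
          (Relation.TransGen.single hwv)))
    · -- Case D : w→v, x→v
      have nvw : ¬ D (some (φ RGV.v)) (some (φ RGV.w)) := fun h => Ivw.mp h hwv
      have nvx : ¬ D (some (φ RGV.v)) (some (φ RGV.x)) := fun h => Ivx.mp h hxv
      rcases dwx with hwx | hxw
      · -- D1 : w→x
        have nxw : ¬ D (some (φ RGV.x)) (some (φ RGV.w)) := Iwx.mp hwx
        have hyw : D (some (φ RGV.y)) (some (φ RGV.w)) := by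
          obtain ⟨u, hu⟩ := aux_exists_in hwio.1
          rcases inw u hu with rfl | rfl | rfl
          · exact absurd hu nvw
          · exact absurd hu nxw
          · exact hu
        have nwy : ¬ D (some (φ RGV.w)) (some (φ RGV.y)) := fun h => Iwy.mp h hyw
        have hzy : D (some (φ RGV.z)) (some (φ RGV.y)) := by
          obtain ⟨u, hu⟩ := aux_exists_in hyio.1
          rcases iny u hu with rfl | rfl
          · exact absurd hu nwy
          · exact hu
        have nyz : ¬ D (some (φ RGV.y)) (some (φ RGV.z)) := fun h => Iyz.mp h hzy
        have hxz : D (some (φ RGV.x)) (some (φ RGV.z)) := by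
          obtain ⟨u, hu⟩ := aux_exists_in hzio.1
          rcases inz u hu with rfl | rfl
          · exact hu
          · exact absurd hu nyz
        -- cycle x→z→y→w→x
        exact hacyc _ (Relation.TransGen.head hxz (Relation.TransGen.head hzy
          (Relation.TransGen.head hyw (Relation.TransGen.single hwx))))
      · -- D2 : x→w
        have nwx : ¬ D (some (φ RGV.w)) (some (φ RGV.x)) := fun h => Iwx.mp h hxw
        have hzx : D (some (φ RGV.z)) (some (φ RGV.x)) := by
          obtain ⟨u, hu⟩ := aux_exists_in hxio.1
          rcases inx u hu with rfl | rfl | rfl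
          · exact absurd hu nvx
          · exact absurd hu nwx
          · exact hu
        have nxz : ¬ D (some (φ RGV.x)) (some (φ RGV.z)) := fun h => Ixz.mp h hzx
        have hyz : D (some (φ RGV.y)) (some (φ RGV.z)) := by
          obtain ⟨u, hu⟩ := aux_exists_in hzio.1
          rcases inz u hu with rfl | rfl
          · exact absurd hu nxz
          · exact hu
        have nzy : ¬ D (some (φ RGV.z)) (some (φ RGV.y)) := Iyz.mp hyz
        have hwy : D (some (φ RGV.w)) (some (φ RGV.y)) := by
          obtain ⟨u, hu⟩ := aux_exists_in hyio.1
          rcases iny u hu with rfl | rfl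
          · exact hu
          · exact absurd hu nzy
        -- cycle w→y→z→x→w
        exact hacyc _ (Relation.TransGen.head hwy (Relation.TransGen.head hyz
          (Relation.TransGen.head hzx (Relation.TransGen.single hxw))))


end PaperFormalization
end

section
/- Let G be the connection gadget. There exists an orientation of G that is F-compatible and strongly TC-compatible in which each of the vertices u and v has in-degree 1 and out-degree 2, and in which (u,s) and (t,v) are arcs. -/
namespace PaperFormalization

/-- Vertices of the connection gadget: connector leaves `s,t`, internal
vertices `u,v,w,w'`, and labelled leaves `lf, lf'`. -/
inductive CGV : Type
  | s | t | u | v | w | w' | lf | lf'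

/-- The edges of the connection gadget (one fixed orientation of each edge). -/
def cgBase : CGV → CGV → Prop
  | .s, .u => True
  | .t, .v => True
  | .u, .v => True
  | .u, .w => True
  | .v, .w' => True
  | .w, .w' => True
  | .w, .lf => True
  | .w', .lf' => True
  | _, _ => False

/-- Adjacency relation of the connection gadget. -/
def cgAdj (a b : CGV) : Prop := cgBase a b ∨ cgBase b a

/-- Labelled leaves of the connection gadget. -/
def cgL : Set CGV := {CGV.lf, CGV.lf'}

/-- Connector (unlabelled) leaves of the connection gadget. -/
def cgU : Set CGV := {CGV.s, CGV.t}

end PaperFormalization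

namespace PaperFormalization

/-- The chosen orientation of the connection gadget. -/
def cgD : CGV → CGV → Prop
  | .t, .v => True
  | .v, .u => True
  | .v, .w' => True
  | .u, .s => True
  | .u, .w => True
  | .w, .w' => True
  | .w, .lf => True
  | .w', .lf' => True
  | _, _ => False

/-- Rank function certifying acyclicity. -/
def cgRk : CGV → ℕ
  | .t => 0 | .v => 1 | .u => 2 | .w => 3 | .w' => 4 | .s => 5 | .lf => 5 | .lf' => 5

lemma cgRk_mono : ∀ a b, cgD a b → cgRk a < cgRk b := by
  intro a b h
  cases a <;> cases b <;> simp_all [cgD, cgRk]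

lemma cgD_acyclic : Acyclic cgD := by
  have key : ∀ a b, Relation.TransGen cgD a b → cgRk a < cgRk b := by
    intro a b h
    induction h with
    | single h => exact cgRk_mono _ _ h
    | tail _ h ih => exact ih.trans (cgRk_mono _ _ h)
  intro v hv
  exact absurd (key v v hv) (lt_irrefl _)

lemma inSet_s : {x | cgD x CGV.s} = {CGV.u} := by ext x; cases x <;> simp [cgD]
lemma inSet_t : {x | cgD x CGV.t} = (∅ : Set CGV) := by ext x; cases x <;> simp [cgD]
lemma inSet_u : {x | cgD x CGV.u} = {CGV.v} := by ext x; cases x <;> simp [cgD]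
lemma inSet_v : {x | cgD x CGV.v} = {CGV.t} := by ext x; cases x <;> simp [cgD]
lemma inSet_w : {x | cgD x CGV.w} = {CGV.u} := by ext x; cases x <;> simp [cgD]
lemma inSet_w' : {x | cgD x CGV.w'} = {CGV.v, CGV.w} := by ext x; cases x <;> simp [cgD]
lemma inSet_lf : {x | cgD x CGV.lf} = {CGV.w} := by ext x; cases x <;> simp [cgD]
lemma inSet_lf' : {x | cgD x CGV.lf'} = {CGV.w'} := by ext x; cases x <;> simp [cgD]

lemma outSet_s : {x | cgD CGV.s x} = (∅ : Set CGV) := by ext x; cases x <;> simp [cgD]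
lemma outSet_t : {x | cgD CGV.t x} = {CGV.v} := by ext x; cases x <;> simp [cgD]
lemma outSet_u : {x | cgD CGV.u x} = {CGV.s, CGV.w} := by ext x; cases x <;> simp [cgD]
lemma outSet_v : {x | cgD CGV.v x} = {CGV.u, CGV.w'} := by ext x; cases x <;> simp [cgD]
lemma outSet_w : {x | cgD CGV.w x} = {CGV.w', CGV.lf} := by ext x; cases x <;> simp [cgD]
lemma outSet_w' : {x | cgD CGV.w' x} = {CGV.lf'} := by ext x; cases x <;> simp [cgD]
lemma outSet_lf : {x | cgD CGV.lf x} = (∅ : Set CGV) := by ext x; cases x <;> simp [cgD]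
lemma outSet_lf' : {x | cgD CGV.lf' x} = (∅ : Set CGV) := by ext x; cases x <;> simp [cgD]

lemma inDeg_s : inDeg cgD CGV.s = 1 := by rw [inDeg, inSet_s]; exact Set.ncard_singleton _
lemma inDeg_t : inDeg cgD CGV.t = 0 := by rw [inDeg, inSet_t]; exact Set.ncard_empty _
lemma inDeg_u : inDeg cgD CGV.u = 1 := by rw [inDeg, inSet_u]; exact Set.ncard_singleton _
lemma inDeg_v : inDeg cgD CGV.v = 1 := by rw [inDeg, inSet_v]; exact Set.ncard_singleton _
lemma inDeg_w : inDeg cgD CGV.w = 1 := by rw [inDeg, inSet_w]; exact Set.ncard_singleton _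
lemma inDeg_w' : inDeg cgD CGV.w' = 2 := by
  rw [inDeg, inSet_w']; exact Set.ncard_pair (by simp)
lemma inDeg_lf : inDeg cgD CGV.lf = 1 := by rw [inDeg, inSet_lf]; exact Set.ncard_singleton _
lemma inDeg_lf' : inDeg cgD CGV.lf' = 1 := by rw [inDeg, inSet_lf']; exact Set.ncard_singleton _

lemma outDeg_s : outDeg cgD CGV.s = 0 := by rw [outDeg, outSet_s]; exact Set.ncard_empty _
lemma outDeg_t : outDeg cgD CGV.t = 1 := by rw [outDeg, outSet_t]; exact Set.ncard_singleton _
lemma outDeg_u : outDeg cgD CGV.u = 2 := by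
  rw [outDeg, outSet_u]; exact Set.ncard_pair (by simp)
lemma outDeg_v : outDeg cgD CGV.v = 2 := by
  rw [outDeg, outSet_v]; exact Set.ncard_pair (by simp)
lemma outDeg_w : outDeg cgD CGV.w = 2 := by
  rw [outDeg, outSet_w]; exact Set.ncard_pair (by simp)
lemma outDeg_w' : outDeg cgD CGV.w' = 1 := by rw [outDeg, outSet_w']; exact Set.ncard_singleton _
lemma outDeg_lf : outDeg cgD CGV.lf = 0 := by rw [outDeg, outSet_lf]; exact Set.ncard_empty _
lemma outDeg_lf' : outDeg cgD CGV.lf' = 0 := by rw [outDeg, outSet_lf']; exact Set.ncard_empty _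

/-- Lemma `connection_gadget`(ii): the connection gadget has
an F-compatible and strongly TC-compatible orientation in which `u` and `v`
each have in-degree 1 and out-degree 2, and `(u,s)` and `(t,v)` are arcs. -/
theorem connection_gadget_orientation_us_tv :
    ∃ D : CGV → CGV → Prop,
      GoodOrientation cgAdj D cgL cgU ∧
      FCompatible D ∧ StrongTCCompatible D cgL cgU ∧
      inDeg D CGV.u = 1 ∧ outDeg D CGV.u = 2 ∧
      inDeg D CGV.v = 1 ∧ outDeg D CGV.v = 2 ∧
      D CGV.u CGV.s ∧ D CGV.t CGV.v := by
  refine ⟨cgD, ⟨⟨?_, ?_⟩, cgD_acyclic, ?_, ?_⟩, ?_, ?_, inDeg_u, outDeg_u, inDeg_v, outDeg_v,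
    trivial, trivial⟩
  · intro a b h; cases a <;> cases b <;> simp_all [cgD, cgAdj, cgBase]
  · intro a b h; cases a <;> cases b <;> simp_all [cgD, cgAdj, cgBase]
  · intro x hx
    rcases hx with h | h <;> subst h
    · exact outDeg_lf
    · exact outDeg_lf'
  · intro x hx
    cases x <;> simp [cgL, cgU, Set.mem_union, Set.mem_insert_iff] at hx
    · exact ⟨inDeg_u.ge, outDeg_u.symm ▸ (by norm_num)⟩
    · exact ⟨inDeg_v.ge, outDeg_v.symm ▸ (by norm_num)⟩
    · exact ⟨inDeg_w.ge, outDeg_w.symm ▸ (by norm_num)⟩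
    · exact ⟨inDeg_w'.symm ▸ (by norm_num), outDeg_w'.ge⟩
  · intro x hx
    cases x <;>
      simp_all [inDeg_s, inDeg_t, inDeg_u, inDeg_v, inDeg_w, inDeg_w', inDeg_lf, inDeg_lf']
    exact outDeg_w'
  · intro x hx
    cases x <;> simp [cgL, cgU, Set.mem_union, Set.mem_insert_iff] at hx
    · exact ⟨CGV.w, trivial, Or.inr ⟨inDeg_w, outDeg_w.symm ▸ (by norm_num)⟩⟩
    · exact ⟨CGV.u, trivial, Or.inr ⟨inDeg_u, outDeg_u.symm ▸ (by norm_num)⟩⟩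
    · exact ⟨CGV.lf, trivial, Or.inl (by simp [cgL])⟩
    · exact ⟨CGV.lf', trivial, Or.inl (by simp [cgL])⟩

end PaperFormalization
end

section
/- Let G be the connection gadget. Every TC-compatible orientation of G has either both arcs (s,u) and (v,t), or both arcs (u,s) and (t,v). -/
/-!
The gadget has an automorphism exchanging `s ↔ t`, `u ↔ v`, `w ↔ w'`, `ℓ ↔ ℓ'`, so we may
assume the arc `u → v`. The labelled leaves force `w → ℓ` and `w' → ℓ'`.

* If also `u → s`, then `u` can only be entered from `w`, `w` only from `w'` and `w'` only
  from `v`, closing the cycle `u → v → w' → w → u`. Hence `s → u`.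
* If moreover `t → v`, then `v` is a reticulation, so by tree-child compatibility `u` has
  the tree child `w`. Then `w → w'`, and `v` must leave through `v → w'`; now `w'` is a
  reticulation and is the only child of `v`, which violates tree-child compatibility at `v`.
  Hence `v → t`.
-/

open Function

section Degrees

variable {V : Type*} {D : V → V → Prop} {v : V}

theorem one_le_inDeg_iff [Finite V] : 1 ≤ inDeg D v ↔ ∃ u, D u v :=
  Set.ncard_pos

theorem one_le_outDeg_iff [Finite V] : 1 ≤ outDeg D v ↔ ∃ u, D v u :=
  Set.ncard_pos

theorem outDeg_eq_zero_iff [Finite V] : outDeg D v = 0 ↔ ∀ u, ¬ D v u := by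
  rw [outDeg, Set.ncard_eq_zero, Set.eq_empty_iff_forall_notMem]
  rfl

theorem eq_of_inDeg_eq_one {a b : V} (h : inDeg D v = 1) (ha : D a v) (hb : D b v) :
    a = b := by
  obtain ⟨c, hc⟩ := Set.ncard_eq_one.1 h
  have ha' : a ∈ ({c} : Set V) := hc ▸ ha
  have hb' : b ∈ ({c} : Set V) := hc ▸ hb
  exact ha'.trans hb'.symm

end Degrees

section Pullback

variable {V W : Type*} {adj D : W → W → Prop} {L Uc : Set W}

theorem inDeg_onFun (e : V ≃ W) (v : V) : inDeg (D on e) v = inDeg D (e v) :=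
  Set.ncard_preimage_of_injective_subset_range (s := {x | D x (e v)}) e.injective
    (by simp)

theorem outDeg_onFun (e : V ≃ W) (v : V) : outDeg (D on e) v = outDeg D (e v) :=
  Set.ncard_preimage_of_injective_subset_range (s := {x | D (e v) x}) e.injective
    (by simp)

theorem Acyclic.onFun (h : Acyclic D) (f : V → W) : Acyclic (D on f) :=
  fun v hv => h (f v) (Relation.TransGen.lift f (fun _ _ => id) v v hv)

theorem IsOrientation.onFun (h : IsOrientation adj D) (f : V → W) :
    IsOrientation (adj on f) (D on f) :=
  ⟨fun _ _ => h.1 _ _, fun _ _ => h.2 _ _⟩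

theorem IsOrientation.asymm (h : IsOrientation adj D) {a b : W} (hab : D a b) : ¬ D b a :=
  (h.2 a b (h.1 a b hab)).1 hab

theorem IsOrientation.rel_or_rel (h : IsOrientation adj D) {a b : W} (hab : adj a b) :
    D a b ∨ D b a :=
  or_iff_not_imp_right.2 (h.2 a b hab).2

theorem GoodOrientation.onFun (h : GoodOrientation adj D L Uc) (e : V ≃ W) :
    GoodOrientation (adj on e) (D on e) (e ⁻¹' L) (e ⁻¹' Uc) := by
  obtain ⟨hor, hacyc, hleaf, hdeg⟩ := h
  refine ⟨hor.onFun e, hacyc.onFun e, fun v hv => ?_, fun v hv => ?_⟩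
  · rw [outDeg_onFun]
    exact hleaf _ hv
  · rw [inDeg_onFun, outDeg_onFun]
    exact hdeg _ hv

theorem TCCompatible.onFun (h : TCCompatible D L Uc) (e : V ≃ W) :
    TCCompatible (D on e) (e ⁻¹' L) (e ⁻¹' Uc) := by
  intro v hv
  obtain ⟨u, hvu, hu⟩ := h (e v) hv
  refine ⟨e.symm u, by rwa [Function.onFun, e.apply_symm_apply], ?_⟩
  rw [inDeg_onFun, outDeg_onFun]
  simpa using hu

end Pullback

namespace PaperFormalization

open CGV

instance : Finite CGV := by
  refine Finite.of_surjective (fun i : Fin 8 => ![s, t, u, v, w, w', lf, lf'] i) ?_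
  intro x
  cases x
  exacts [⟨0, rfl⟩, ⟨1, rfl⟩, ⟨2, rfl⟩, ⟨3, rfl⟩, ⟨4, rfl⟩, ⟨5, rfl⟩, ⟨6, rfl⟩, ⟨7, rfl⟩]

def cgSwap : CGV → CGV
  | s => t | t => s | u => v | v => u | w => w' | w' => w | lf => lf' | lf' => lf

def cgSwapPerm : Equiv.Perm CGV :=
  Involutive.toPerm cgSwap fun x => by cases x <;> rfl

theorem cgSwapPerm_apply (x : CGV) : cgSwapPerm x = cgSwap x := rfl

theorem cgAdj_onFun_cgSwapPerm : (cgAdj on cgSwapPerm) = cgAdj := by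
  funext a b
  cases a <;> cases b <;> simp [onFun, cgSwapPerm_apply, cgSwap, cgAdj, cgBase]

theorem preimage_cgSwapPerm_cgL : cgSwapPerm ⁻¹' cgL = cgL := by
  ext x
  cases x <;> simp [cgSwapPerm_apply, cgSwap, cgL]

theorem preimage_cgSwapPerm_cgU : cgSwapPerm ⁻¹' cgU = cgU := by
  ext x
  cases x <;> simp [cgSwapPerm_apply, cgSwap, cgU]

section Gadget

variable {D : CGV → CGV → Prop}

theorem not_arc_u_s_of_arc_u_v (hD : GoodOrientation cgAdj D cgL cgU) (huv : D u v) :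
    ¬ D u s := by
  obtain ⟨hor, hacyc, hleaf, hdeg⟩ := hD
  intro hus
  have hlf : ¬ D lf w := outDeg_eq_zero_iff.1 (hleaf lf (by simp [cgL])) w
  have hlf' : ¬ D lf' w' := outDeg_eq_zero_iff.1 (hleaf lf' (by simp [cgL])) w'
  have hwu : D w u := by
    obtain ⟨x, hxu⟩ := one_le_inDeg_iff.1 (hdeg u (by simp [cgL, cgU])).1
    cases x <;> have hadj := hor.1 _ _ hxu <;> simp [cgAdj, cgBase] at hadj
    exacts [(hor.asymm hus hxu).elim, (hor.asymm huv hxu).elim, hxu]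
  have hw'w : D w' w := by
    obtain ⟨x, hxw⟩ := one_le_inDeg_iff.1 (hdeg w (by simp [cgL, cgU])).1
    cases x <;> have hadj := hor.1 _ _ hxw <;> simp [cgAdj, cgBase] at hadj
    exacts [(hor.asymm hwu hxw).elim, hxw, (hlf hxw).elim]
  have hvw' : D v w' := by
    obtain ⟨x, hxw'⟩ := one_le_inDeg_iff.1 (hdeg w' (by simp [cgL, cgU])).1
    cases x <;> have hadj := hor.1 _ _ hxw' <;> simp [cgAdj, cgBase] at hadj
    exacts [hxw', (hor.asymm hw'w hxw').elim, (hlf' hxw').elim]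
  exact hacyc u (.head huv (.head hvw' (.head hw'w (.single hwu))))

theorem not_arc_t_v_of_arc_s_u_of_arc_u_v (hD : GoodOrientation cgAdj D cgL cgU)
    (htc : TCCompatible D cgL cgU) (hsu : D s u) (huv : D u v) : ¬ D t v := by
  obtain ⟨hor, -, -, hdeg⟩ := hD
  intro htv
  have hv : inDeg D v ≠ 1 := fun h => by cases eq_of_inDeg_eq_one h htv huv
  have huw : D u w ∧ inDeg D w = 1 := by
    obtain ⟨y, huy, hy⟩ := htc u (by simp [cgL, cgU])
    cases y <;> have hadj := hor.1 _ _ huy <;> simp [cgAdj, cgBase] at hadj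
    · exact (hor.asymm hsu huy).elim
    · simp [cgL, cgU, hv] at hy
    · exact ⟨huy, (hy.resolve_left (by simp [cgL, cgU])).1⟩
  have hww' : D w w' := (hor.rel_or_rel (by simp [cgAdj, cgBase])).resolve_right
    fun hw'w => by cases eq_of_inDeg_eq_one huw.2 huw.1 hw'w
  have hvw' : D v w' := by
    obtain ⟨x, hvx⟩ := one_le_outDeg_iff.1 (hdeg v (by simp [cgL, cgU])).2
    cases x <;> have hadj := hor.1 _ _ hvx <;> simp [cgAdj, cgBase] at hadj
    exacts [(hor.asymm htv hvx).elim, (hor.asymm huv hvx).elim, hvx]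
  obtain ⟨y, hvy, hy⟩ := htc v (by simp [cgL, cgU])
  cases y <;> have hadj := hor.1 _ _ hvy <;> simp [cgAdj, cgBase] at hadj
  · exact hor.asymm htv hvy
  · exact hor.asymm huv hvy
  · have hw' : inDeg D w' = 1 := (hy.resolve_left (by simp [cgL, cgU])).1
    cases eq_of_inDeg_eq_one hw' hww' hvw'

theorem arc_s_u_and_arc_v_t_of_arc_u_v (hD : GoodOrientation cgAdj D cgL cgU)
    (htc : TCCompatible D cgL cgU) (huv : D u v) : D s u ∧ D v t := by
  have hsu : D s u := (hD.1.rel_or_rel (by simp [cgAdj, cgBase])).resolve_right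
    (not_arc_u_s_of_arc_u_v hD huv)
  exact ⟨hsu, (hD.1.rel_or_rel (by simp [cgAdj, cgBase])).resolve_left
    (not_arc_t_v_of_arc_s_u_of_arc_u_v hD htc hsu huv)⟩

end Gadget

/-- Lemma `connection_gadget`(iii): every TC-compatible
orientation of the connection gadget has either both arcs `(s,u)` and `(v,t)`,
or both arcs `(u,s)` and `(t,v)`. -/
theorem connection_gadget_TC_orientations_dichotomy :
    ∀ D : CGV → CGV → Prop,
      GoodOrientation cgAdj D cgL cgU →
      TCCompatible D cgL cgU →
      (D CGV.s CGV.u ∧ D CGV.v CGV.t) ∨ (D CGV.u CGV.s ∧ D CGV.t CGV.v) := by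
  intro D hD htc
  rcases hD.1.rel_or_rel (show cgAdj u v by simp [cgAdj, cgBase]) with huv | hvu
  · exact Or.inl (arc_s_u_and_arc_v_t_of_arc_u_v hD htc huv)
  · have hD' := hD.onFun cgSwapPerm
    have htc' := htc.onFun cgSwapPerm
    rw [cgAdj_onFun_cgSwapPerm, preimage_cgSwapPerm_cgL, preimage_cgSwapPerm_cgU] at hD'
    rw [preimage_cgSwapPerm_cgL, preimage_cgSwapPerm_cgU] at htc'
    obtain ⟨htv, hus⟩ := arc_s_u_and_arc_v_t_of_arc_u_v hD' htc' hvu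
    exact Or.inr ⟨hus, htv⟩

end PaperFormalization
end
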